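/- arXiv:1612.06095 — 6 statements merged into one kernel-verified Lean document; each statement's English description precedes it below -/
import Mathlib

section
/- Let f:[0,1]→ℝ be continuous, J⊂[0,1] an interval, and n∈ℕ. Then the total variation of f^n restricted to f(J) is at most the total variation of f^{n+1} restricted to J. -/
open Set

section Lift

variable {α δ ι : Type*} [ConditionallyCompleteLinearOrder α] [TopologicalSpace α]
  [OrderTopology α] [DenselyOrdered α] [LinearOrder δ] [TopologicalSpace δ]
  [OrderClosedTopology δ] [Preorder ι]

/-- Each value of a monotone family between `f c` and `f d` is lifted to its leftmost preimage
in `[c, d]`; the intermediate value theorem on `[c, x j]` shows these preimages increase. -/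
theorem ContinuousOn.exists_monotone_lift {f : α → δ} {c d : α} (hcd : c ≤ d)
    (hf : ContinuousOn f (Icc c d)) {u : ι → δ} (hu : Monotone u)
    (hu_mem : ∀ i, u i ∈ Icc (f c) (f d)) :
    ∃ x : ι → α, Monotone x ∧ (∀ i, x i ∈ Icc c d) ∧ ∀ i, f (x i) = u i := by
  set fiber : ι → Set α := fun i => Icc c d ∩ f ⁻¹' {u i}
  have fiber_inf_mem : ∀ i, sInf (fiber i) ∈ fiber i := by
    intro i
    obtain ⟨t, ht, hft⟩ := intermediate_value_Icc hcd hf (hu_mem i)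
    exact (hf.preimage_isClosed_of_isClosed isClosed_Icc isClosed_singleton).csInf_mem
      ⟨t, ht, hft⟩ (bddBelow_Icc.mono inter_subset_left)
  refine ⟨fun i => sInf (fiber i), fun i j hij => ?_, fun i => (fiber_inf_mem i).1,
    fun i => (fiber_inf_mem i).2⟩
  obtain ⟨⟨hcx, hxd⟩, hfx⟩ := fiber_inf_mem j
  have hsub : Icc c (sInf (fiber j)) ⊆ Icc c d := Icc_subset_Icc le_rfl hxd
  obtain ⟨t, ht, hft⟩ := intermediate_value_Icc hcx (hf.mono hsub)
    ⟨(hu_mem i).1, hfx.symm ▸ hu hij⟩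
  exact (csInf_le (bddBelow_Icc.mono inter_subset_left) ⟨hsub ht, hft⟩).trans ht.2

end Lift

section Variation

variable {δ E : Type*} [LinearOrder δ] [TopologicalSpace δ] [OrderClosedTopology δ]
  [PseudoEMetricSpace E]

theorem sum_edist_le_eVariationOn_comp (g : δ → E) {f : ℝ → δ} {J : Set ℝ}
    (hf : ContinuousOn f J) (hJ : J.OrdConnected) {u : ℕ → δ} (hu : Monotone u) {c d : ℝ}
    (hc : c ∈ J) (hd : d ∈ J) (hu_mem : ∀ i, u i ∈ Icc (f c) (f d)) (m : ℕ) :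
    ∑ i ∈ Finset.range m, edist (g (u (i + 1))) (g (u i)) ≤ eVariationOn (g ∘ f) J := by
  wlog hcd : c ≤ d generalizing f J c d
  · -- Reflecting the line turns the lift from `[d, c]` into one from `[-c, -d]`.
    calc ∑ i ∈ Finset.range m, edist (g (u (i + 1))) (g (u i))
        ≤ eVariationOn (g ∘ (f ∘ Neg.neg)) (Neg.neg ⁻¹' J) :=
          this (hf.comp continuous_neg.continuousOn (mapsTo_preimage _ _))
            (hJ.preimage_anti fun _ _ => neg_le_neg) (by simpa using hc) (by simpa using hd)
            (by simpa using hu_mem) (neg_le_neg (le_of_not_ge hcd))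
      _ ≤ eVariationOn (g ∘ f) J :=
          eVariationOn.comp_le_of_antitoneOn _ _ (fun _ _ _ _ => neg_le_neg)
            (mapsTo_preimage _ _)
  obtain ⟨x, hx_mono, hx_mem, hfx⟩ := (hf.mono (hJ.out hc hd)).exists_monotone_lift hcd hu hu_mem
  calc ∑ i ∈ Finset.range m, edist (g (u (i + 1))) (g (u i))
      = ∑ i ∈ Finset.range m, edist ((g ∘ f) (x (i + 1))) ((g ∘ f) (x i)) := by
        simp only [Function.comp_apply, hfx]
    _ ≤ eVariationOn (g ∘ f) J := eVariationOn.sum_le hx_mono fun i => hJ.out hc hd (hx_mem i)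

theorem eVariationOn_image_le_comp (g : δ → E) {f : ℝ → δ} {J : Set ℝ}
    (hf : ContinuousOn f J) (hJ : J.OrdConnected) :
    eVariationOn g (f '' J) ≤ eVariationOn (g ∘ f) J := by
  refine iSup_le fun ⟨m, u, hu, hu_mem⟩ => ?_
  -- Freezing `u` after index `m` keeps the sum and puts every value between `u 0` and `u m`.
  set v : ℕ → δ := fun i => u (min i m)
  have hv : Monotone v := fun i j hij => hu (min_le_min_right m hij)
  obtain ⟨c, hc, hfc⟩ := hu_mem 0
  obtain ⟨d, hd, hfd⟩ := hu_mem m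
  have hv_mem : ∀ i, v i ∈ Icc (f c) (f d) := fun i =>
    ⟨hfc ▸ hu (Nat.zero_le _), hfd ▸ hu (min_le_right i m)⟩
  calc ∑ i ∈ Finset.range m, edist (g (u (i + 1))) (g (u i))
      = ∑ i ∈ Finset.range m, edist (g (v (i + 1))) (g (v i)) :=
        Finset.sum_congr rfl fun i hi => by
          have hi : i < m := Finset.mem_range.1 hi
          simp only [v, min_eq_left hi.le, min_eq_left (Nat.succ_le_of_lt hi)]
    _ ≤ eVariationOn (g ∘ f) J := sum_edist_le_eVariationOn_comp g hf hJ hv hc hd hv_mem m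

end Variation

theorem eVariationOn_iterate_image_le_general (f : ℝ → ℝ)
    (hf : ContinuousOn f (Set.Icc 0 1))
    (J : Set ℝ) (hJ : J ⊆ Set.Icc 0 1) (hJint : J.OrdConnected) (n : ℕ) :
    eVariationOn (f^[n]) (f '' J) ≤ eVariationOn (f^[n+1]) J := by
  rw [Function.iterate_succ]
  exact eVariationOn_image_le_comp _ (hf.mono hJ) hJint

/-- Let `f : [0,1] → [0,1]` be continuous, `J ⊆ [0,1]` an interval, `n ∈ ℕ`.
Then `Var f^n|_{f(J)} ≤ Var f^{n+1}|_J`. -/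
theorem eVariationOn_iterate_image_le (f : ℝ → ℝ)
    (hf : ContinuousOn f (Set.Icc 0 1))
    (hmaps : Set.MapsTo f (Set.Icc 0 1) (Set.Icc 0 1))
    (J : Set ℝ) (hJ : J ⊆ Set.Icc 0 1) (hJint : J.OrdConnected) (n : ℕ) :
    eVariationOn (f^[n]) (f '' J) ≤ eVariationOn (f^[n+1]) J :=
  eVariationOn_iterate_image_le_general f hf J hJ hJint n
end

section
/- Let f:[0,1]→[0,1] be continuous with finite growth rate of variation ν(f) = limsup_n (Var f^n)^{1/n}, and let ε>0. Then the function φ(x) = Σ_{n=0}^∞ (Var f^n|_{[0,x]})/(ν(f)+ε)^n converges for all x∈[0,1] and defines a continuous strictly increasing function on [0,1]. -/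
open unitInterval Filter
open scoped ENNReal

/-!
Write `V g x = Var g|_{[0,x]}`. If `g` is continuous with bounded variation, then `V g` is
continuous, since the variation of `g` on a short interval next to a point tends to `0`. Since
`ν(f) < ν(f) + ε`, the root test bounds `Var f^n / (ν(f) + ε)^n` by a summable geometric
sequence, so the series converges uniformly and `φ` is continuous. Every term is monotone, and the
term `n = 0` is `V id x = x`, which is strictly increasing.
-/

open Set Topology

theorem ENNReal.summable_toReal_div_pow_of_limsup_rpow_lt {a : ℕ → ℝ≥0∞} {r : ℝ}
    (h : limsup (fun n : ℕ => a n ^ (1 / (n : ℝ))) atTop < ENNReal.ofReal r) :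
    Summable fun n => (a n).toReal / r ^ n := by
  obtain ⟨q, hlim, hqr⟩ := exists_between h
  have hq : q ≠ ⊤ := hqr.ne_top
  have hr : 0 < r := ENNReal.ofReal_pos.1 (bot_le.trans_lt hqr)
  have hratio : q.toReal / r < 1 := (div_lt_one hr).2 ((ENNReal.lt_ofReal_iff_toReal_lt hq).1 hqr)
  refine .of_norm_bounded_eventually_nat (summable_geometric_of_lt_one (by positivity) hratio) ?_
  filter_upwards [eventually_lt_of_limsup_lt hlim, eventually_ne_atTop 0] with n hn hn0
  rw [one_div, ENNReal.rpow_inv_lt_iff (by positivity), ENNReal.rpow_natCast] at hn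
  rw [Real.norm_of_nonneg (by positivity), div_pow, ← ENNReal.toReal_pow]
  gcongr
  exact ENNReal.pow_ne_top hq

section VariationFunction

variable {α E : Type*} [LinearOrder α]

theorem eVariationOn_Iic_add_Icc [PseudoEMetricSpace E] (f : α → E) {x y : α} (h : x ≤ y) :
    eVariationOn f (Iic x) + eVariationOn f (Icc x y) = eVariationOn f (Iic y) := by
  rw [← eVariationOn.union f isGreatest_Iic (isLeast_Icc h), Iic_union_Icc_eq_Iic h]

namespace BoundedVariationOn

theorem toReal_eVariationOn_Iic_sub [PseudoEMetricSpace E] {f : α → E}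
    (hf : BoundedVariationOn f univ) {x y : α} (h : x ≤ y) :
    (eVariationOn f (Iic y)).toReal - (eVariationOn f (Iic x)).toReal =
      (eVariationOn f (Icc x y)).toReal := by
  rw [← eVariationOn_Iic_add_Icc f h,
    ENNReal.toReal_add (hf.mono (subset_univ _)) (hf.mono (subset_univ _)), add_sub_cancel_left]

theorem monotone_toReal_eVariationOn_Iic [PseudoEMetricSpace E] {f : α → E}
    (hf : BoundedVariationOn f univ) : Monotone fun x => (eVariationOn f (Iic x)).toReal :=
  fun _ _ h => sub_nonneg.1 (hf.toReal_eVariationOn_Iic_sub h ▸ ENNReal.toReal_nonneg)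

theorem strictMono_toReal_eVariationOn_Iic [EMetricSpace E] {f : α → E}
    (hf : BoundedVariationOn f univ) (hinj : Function.Injective f) :
    StrictMono fun x => (eVariationOn f (Iic x)).toReal := by
  intro x y h
  have hdist : edist (f x) (f y) ≤ eVariationOn f (Icc x y) :=
    eVariationOn.edist_le f ⟨le_rfl, h.le⟩ ⟨h.le, le_rfl⟩
  have hpos : 0 < (eVariationOn f (Icc x y)).toReal :=
    ENNReal.toReal_pos ((edist_pos.2 (hinj.ne h.ne)).trans_le hdist).ne'
      (hf.mono (subset_univ _))
  linarith [hf.toReal_eVariationOn_Iic_sub h.le]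

section Topology

variable [TopologicalSpace α] [OrderTopology α] [PseudoEMetricSpace E] {f : α → E}

theorem continuousWithinAt_Iic_toReal_eVariationOn_Iic (hf : BoundedVariationOn f univ) {x : α}
    (hc : ContinuousWithinAt f (Iic x) x) :
    ContinuousWithinAt (fun y => (eVariationOn f (Iic y)).toReal) (Iic x) x := by
  have h : Tendsto (fun y => (eVariationOn f (Icc y x)).toReal) (𝓝[Iic x] x) (𝓝 0) := by
    have := (ENNReal.tendsto_toReal ENNReal.zero_ne_top).comp
      (hf.tendsto_eVariationOn_Icc_zero_left (s := univ) (by simpa using hc))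
    simpa [Function.comp_def] using this.mono_left (nhdsWithin_mono _ (subset_univ _))
  have h' := (tendsto_const_nhds (x := (eVariationOn f (Iic x)).toReal)).sub h
  rw [sub_zero] at h'
  refine h'.congr' ?_
  filter_upwards [self_mem_nhdsWithin] with y hy
  rw [← hf.toReal_eVariationOn_Iic_sub hy, sub_sub_cancel]

theorem continuousWithinAt_Ici_toReal_eVariationOn_Iic (hf : BoundedVariationOn f univ) {x : α}
    (hc : ContinuousWithinAt f (Ici x) x) :
    ContinuousWithinAt (fun y => (eVariationOn f (Iic y)).toReal) (Ici x) x := by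
  have h : Tendsto (fun y => (eVariationOn f (Icc x y)).toReal) (𝓝[Ici x] x) (𝓝 0) := by
    have := (ENNReal.tendsto_toReal ENNReal.zero_ne_top).comp
      (hf.tendsto_eVariationOn_Icc_zero_right (s := univ) x (by simpa using hc))
    simpa [Function.comp_def] using this.mono_left (nhdsWithin_mono _ (subset_univ _))
  have h' := (tendsto_const_nhds (x := (eVariationOn f (Iic x)).toReal)).add h
  rw [add_zero] at h'
  refine h'.congr' ?_
  filter_upwards [self_mem_nhdsWithin] with y hy
  rw [← hf.toReal_eVariationOn_Iic_sub hy, add_sub_cancel]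

theorem continuous_toReal_eVariationOn_Iic (hf : BoundedVariationOn f univ) (hc : Continuous f) :
    Continuous fun x => (eVariationOn f (Iic x)).toReal :=
  continuous_iff_continuousAt.2 fun _ => continuousAt_iff_continuous_left_right.2
    ⟨hf.continuousWithinAt_Iic_toReal_eVariationOn_Iic hc.continuousWithinAt,
      hf.continuousWithinAt_Ici_toReal_eVariationOn_Iic hc.continuousWithinAt⟩

end Topology

end BoundedVariationOn

end VariationFunction

/-- Let `f : [0,1] → [0,1]` be continuous with finite growth rate of variation
`ν(f) = limsup_n (Var f^n)^{1/n}`, and let `ε > 0`.  Then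
`φ(x) = Σ_{n=0}^∞ (Var f^n|_{[0,x]}) / (ν(f)+ε)^n` converges for all `x ∈ [0,1]`
and defines a continuous strictly increasing function on `[0,1]`. -/
theorem series_of_variations_converges_and_is_continuous_strictMono
    (f : I → I) (hf : Continuous f)
    (hfin : ∀ n : ℕ, eVariationOn (f^[n]) (Set.univ : Set I) ≠ ⊤)
    (ν : ℝ≥0∞)
    (hν : ν = Filter.limsup
      (fun n : ℕ => eVariationOn (f^[n]) (Set.univ : Set I) ^ (1 / (n : ℝ))) Filter.atTop)
    (hνfin : ν ≠ ⊤) (ε : ℝ) (hε : 0 < ε)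
    (φ : I → ℝ)
    (hφ : φ = fun x : I =>
      ∑' n : ℕ, (eVariationOn (f^[n]) (Set.Iic x)).toReal / (ν.toReal + ε) ^ n) :
    (∀ x : I, Summable fun n : ℕ =>
        (eVariationOn (f^[n]) (Set.Iic x)).toReal / (ν.toReal + ε) ^ n) ∧
      Continuous φ ∧ StrictMono φ := by
  have hbv : ∀ n, BoundedVariationOn (f^[n]) univ := hfin
  have hν_lt : ν < ENNReal.ofReal (ν.toReal + ε) :=
    (ENNReal.lt_ofReal_iff_toReal_lt hνfin).2 (lt_add_of_pos_right _ hε)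
  have hmajor := ENNReal.summable_toReal_div_pow_of_limsup_rpow_lt (hν.symm.trans_lt hν_lt)
  have hterm_le : ∀ n (x : I), ‖(eVariationOn (f^[n]) (Iic x)).toReal / (ν.toReal + ε) ^ n‖ ≤
      (eVariationOn (f^[n]) univ).toReal / (ν.toReal + ε) ^ n := fun n x => by
    rw [Real.norm_of_nonneg (by positivity)]
    gcongr
    exacts [hfin n, eVariationOn.mono _ (subset_univ _)]
  have hsumm := fun x : I => hmajor.of_norm_bounded (hterm_le · x)
  refine ⟨hsumm, hφ ▸ continuous_tsum (fun n => ?_) hmajor hterm_le, hφ ▸ fun x y hxy => ?_⟩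
  · exact ((hbv n).continuous_toReal_eVariationOn_Iic (hf.iterate n)).div_const _
  refine (hsumm x).tsum_lt_tsum (i := 0) (fun n => ?_) ?_ (hsumm y)
  · gcongr ?_ / _
    exact (hbv n).monotone_toReal_eVariationOn_Iic hxy.le
  · simpa using (hbv 0).strictMono_toReal_eVariationOn_Iic Function.injective_id hxy
end

section
/- Let f ∈ 𝒞ℳℳ with partition set P. For partition intervals I_0,…,I_n ∈ ℬ(P) with [I_0⋯I_n] := I_0 ∩ f^{-1}I_1 ∩ ⋯ ∩ f^{-n}I_n nonempty, the restriction f^n|_{[I_0⋯I_n]} : [I_0⋯I_n] → I_n is a homeomorphism. -/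
/-!
Topological mixing forbids `f` from being constant on an open interval, so the monotonicity on
each partition interval `J` is strict. Since `J` is open with endpoints in `P` and `f(P) ⊆ P`,
`f(J)` is open and its closure adds only points of `P`; by connectedness every partition
interval meeting `f(J)` lies inside it (the Markov property). Inductively, the cylinder is an
interval on which `f^[n]` is strictly monotone or antitone and which it maps onto `I_n`, and such
a bijection between intervals is a homeomorphism.
-/

open unitInterval Set

section Mixing

variable {X : Type*} [TopologicalSpace X]

def IsTopologicallyMixing (f : X → X) : Prop :=
  ∀ U V : Set X, IsOpen U → IsOpen V → U.Nonempty → V.Nonempty →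
    ∃ n0 : ℕ, ∀ n ≥ n0, (f^[n] '' U ∩ V).Nonempty

/-- A late iterate of `U` meets two disjoint open sets, so it cannot be a single point. -/
theorem IsTopologicallyMixing.nontrivial_image [T2Space X] [Nontrivial X] {f : X → X}
    (hf : IsTopologicallyMixing f) {U : Set X} (hU : IsOpen U) (hne : U.Nonempty) :
    (f '' U).Nontrivial := by
  by_contra hsub
  rw [not_nontrivial_iff] at hsub
  obtain ⟨a, b, hab⟩ := exists_pair_ne X
  obtain ⟨V, W, hV, hW, haV, hbW, hVW⟩ := t2_separation hab
  obtain ⟨n, hn⟩ := hf U V hU hV hne ⟨a, haV⟩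
  obtain ⟨m, hm⟩ := hf U W hU hW hne ⟨b, hbW⟩
  have hiter : (f^[max n m + 1] '' U).Subsingleton := by
    rw [Function.iterate_succ, image_comp]
    exact hsub.image _
  obtain ⟨y, hyU, hyV⟩ := hn (max n m + 1) (by omega)
  obtain ⟨z, hzU, hzW⟩ := hm (max n m + 1) (by omega)
  exact hVW.ne_of_mem hyV hzW (hiter hyU hzU)

theorem IsTopologicallyMixing.strictMonoOn_or_strictAntiOn [LinearOrder X] [OrderTopology X]
    [DenselyOrdered X] {f : X → X} (hf : IsTopologicallyMixing f) {J : Set X}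
    (hJ : J.OrdConnected) (hmono : MonotoneOn f J ∨ AntitoneOn f J) :
    StrictMonoOn f J ∨ StrictAntiOn f J := by
  have hinj : InjOn f J := by
    intro a ha b hb hab
    by_contra hne
    wlog hlt : a < b generalizing a b
    · exact this hb ha hab.symm (Ne.symm hne) ((not_lt.1 hlt).lt_of_ne (Ne.symm hne))
    have hconst : ∀ z ∈ Ioo a b, f z = f a := fun z hz => by
      have hzJ := hJ.out ha hb (Ioo_subset_Icc_self hz)
      rcases hmono with h | h
      · exact le_antisymm ((h hzJ hb hz.2.le).trans hab.ge) (h ha hzJ hz.1.le)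
      · exact le_antisymm (h ha hzJ hz.1.le) (hab.le.trans (h hzJ hb hz.2.le))
    have : Nontrivial X := ⟨⟨a, b, hlt.ne⟩⟩
    refine (hf.nontrivial_image isOpen_Ioo (nonempty_Ioo.2 hlt)).not_subsingleton ?_
    exact subsingleton_of_forall_eq (f a) (by rintro _ ⟨z, hz, rfl⟩; exact hconst z hz)
  exact hmono.imp (·.strictMonoOn_of_injOn hinj) (·.strictAntiOn_of_injOn hinj)

end Mixing

section Order

variable {α β : Type*} [LinearOrder α] [LinearOrder β]

theorem Set.OrdConnected.inter_preimage {f : α → β} {s : Set α} {t : Set β}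
    (hs : s.OrdConnected) (ht : t.OrdConnected) (hf : MonotoneOn f s ∨ AntitoneOn f s) :
    (s ∩ f ⁻¹' t).OrdConnected := by
  refine ⟨fun a ha b hb z hz => ⟨hs.out ha.1 hb.1 hz, ?_⟩⟩
  have hzs := hs.out ha.1 hb.1 hz
  rcases hf with h | h
  · exact ht.out ha.2 hb.2 ⟨h ha.1 hzs hz.1, h hzs hb.1 hz.2⟩
  · exact ht.out hb.2 ha.2 ⟨h hzs hb.1 hz.2, h ha.1 hzs hz.1⟩

theorem isOpen_image_of_strictMonoOn_or_strictAntiOn [TopologicalSpace β] [OrderTopology β]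
    {g : α → β} {s : Set α} (hg : StrictMonoOn g s ∨ StrictAntiOn g s)
    (himage : (g '' s).OrdConnected) (hs : ∀ w ∈ s, ∃ a ∈ s, ∃ b ∈ s, a < w ∧ w < b) :
    IsOpen (g '' s) := by
  rw [isOpen_iff_mem_nhds]
  rintro _ ⟨w, hw, rfl⟩
  obtain ⟨a, ha, b, hb, haw, hwb⟩ := hs w hw
  rcases hg with h | h
  · exact Filter.mem_of_superset (Ioo_mem_nhds (h ha hw haw) (h hw hb hwb))
      (Ioo_subset_Icc_self.trans (himage.out (mem_image_of_mem g ha) (mem_image_of_mem g hb)))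
  · exact Filter.mem_of_superset (Ioo_mem_nhds (h hw hb hwb) (h ha hw haw))
      (Ioo_subset_Icc_self.trans (himage.out (mem_image_of_mem g hb) (mem_image_of_mem g ha)))

theorem exists_homeomorph_of_strictMonoOn_or_strictAntiOn [TopologicalSpace α] [OrderTopology α]
    [TopologicalSpace β] [OrderTopology β] {g : α → β} {s : Set α} {t : Set β}
    [s.OrdConnected] [t.OrdConnected] (hg : StrictMonoOn g s ∨ StrictAntiOn g s)
    (hst : g '' s = t) : ∃ e : s ≃ₜ t, ∀ x, (e x : β) = g x := by
  subst hst
  rcases hg with h | h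
  · exact ⟨(h.orderIso g s).toHomeomorph, fun _ => rfl⟩
  · have : (OrderDual.toDual ∘ g '' s).OrdConnected := ‹(g '' s).OrdConnected›.dual
    exact ⟨(h.dual_right.orderIso _ s).toHomeomorph, fun _ => rfl⟩

end Order

section Cylinder

variable {α : Type*}

def cylinder (f : α → α) {n : ℕ} (Is : Fin (n + 1) → Set α) : Set α :=
  ⋂ i : Fin (n + 1), f^[(i : ℕ)] ⁻¹' Is i

variable {f : α → α}

theorem cylinder_zero (Is : Fin 1 → Set α) : cylinder f Is = Is 0 := by
  simp [cylinder, Fin.forall_fin_one, Set.ext_iff]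

theorem cylinder_succ {n : ℕ} (Is : Fin (n + 2) → Set α) :
    cylinder f Is = Is 0 ∩ f ⁻¹' cylinder f (Fin.tail Is) := by
  ext x
  simp [cylinder, Fin.forall_fin_succ, Fin.tail, Function.iterate_succ_apply]

theorem cylinder_subset_zero {n : ℕ} (Is : Fin (n + 1) → Set α) : cylinder f Is ⊆ Is 0 := by
  simpa [cylinder] using iInter_subset (fun i : Fin (n + 1) => f^[(i : ℕ)] ⁻¹' Is i) 0

theorem ordConnected_cylinder [LinearOrder α] {n : ℕ} {Is : Fin (n + 1) → Set α}
    (hIs : ∀ i, (Is i).OrdConnected) (hf : ∀ i, MonotoneOn f (Is i) ∨ AntitoneOn f (Is i)) :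
    (cylinder f Is).OrdConnected := by
  induction n with
  | zero => rw [cylinder_zero]; exact hIs 0
  | succ n ih =>
    rw [cylinder_succ]
    exact (hIs 0).inter_preimage (ih (fun i => hIs i.succ) (fun i => hf i.succ)) (hf 0)

theorem strictMonoOn_or_strictAntiOn_iterate_cylinder [Preorder α] {n : ℕ}
    {Is : Fin (n + 1) → Set α} (hf : ∀ i, StrictMonoOn f (Is i) ∨ StrictAntiOn f (Is i)) :
    StrictMonoOn f^[n] (cylinder f Is) ∨ StrictAntiOn f^[n] (cylinder f Is) := by
  induction n with
  | zero => exact Or.inl strictMonoOn_id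
  | succ n ih =>
    have hmaps : MapsTo f (cylinder f Is) (cylinder f (Fin.tail Is)) := fun x hx => by
      rw [cylinder_succ] at hx
      exact hx.2
    have hsub := cylinder_subset_zero (f := f) Is
    rw [Function.iterate_succ]
    rcases ih (fun i => hf i.succ) with hn | hn <;> rcases hf 0 with h0 | h0
    · exact Or.inl (hn.comp (h0.mono hsub) hmaps)
    · exact Or.inr (hn.comp_strictAntiOn (h0.mono hsub) hmaps)
    · exact Or.inr (hn.comp_strictMonoOn (h0.mono hsub) hmaps)
    · exact Or.inl (hn.comp (h0.mono hsub) hmaps)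

theorem image_iterate_cylinder {n : ℕ} {Is : Fin (n + 1) → Set α}
    (hmarkov : ∀ i j, (f '' Is i ∩ Is j).Nonempty → Is j ⊆ f '' Is i)
    (hne : (cylinder f Is).Nonempty) : f^[n] '' cylinder f Is = Is (Fin.last n) := by
  induction n with
  | zero => simp [cylinder_zero]
  | succ n ih =>
    rw [cylinder_succ] at hne ⊢
    obtain ⟨x, hx0, hx⟩ := hne
    have hx1 : f x ∈ Is 1 := cylinder_subset_zero (Fin.tail Is) hx
    have hcover : cylinder f (Fin.tail Is) ⊆ f '' Is 0 := fun y hy =>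
      hmarkov 0 1 ⟨f x, mem_image_of_mem f hx0, hx1⟩ (cylinder_subset_zero (Fin.tail Is) hy)
    rw [Function.iterate_succ, image_comp, image_inter_preimage, inter_eq_right.2 hcover,
      ih (Is := Fin.tail Is) (fun i j => hmarkov i.succ j.succ) ⟨f x, hx⟩]
    simp [Fin.tail]

end Cylinder

section Components

variable {X Y : Type*} [TopologicalSpace X] [TopologicalSpace Y]

theorem IsOpen.closure_connectedComponentIn_inter_subset [LocallyConnectedSpace X] {F : Set X}
    (hF : IsOpen F) (x : X) : closure (connectedComponentIn F x) ∩ F ⊆ connectedComponentIn F x := by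
  rintro w ⟨hw, hwF⟩
  obtain ⟨u, huw, hux⟩ :=
    mem_closure_iff.1 hw _ hF.connectedComponentIn (mem_connectedComponentIn hwF)
  rw [connectedComponentIn_eq hux, ← connectedComponentIn_eq huw]
  exact mem_connectedComponentIn hwF

theorem IsPreconnected.subset_image_of_isOpen_image [CompactSpace X] [T2Space Y] {f : X → Y}
    (hf : Continuous f) {J P : Set X} {K : Set Y} (hK : IsPreconnected K)
    (hJ : closure J ∩ Pᶜ ⊆ J) (hPK : Disjoint (f '' P) K) (hopen : IsOpen (f '' J))
    (hmeet : (f '' J ∩ K).Nonempty) : K ⊆ f '' J := by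
  refine hK.subset_of_closure_inter_subset hopen (inter_comm (f '' J) K ▸ hmeet) ?_
  have hclosed : IsClosed (f '' closure J) := (isClosed_closure.isCompact.image hf).isClosed
  rintro _ ⟨hy, hyK⟩
  obtain ⟨w, hw, rfl⟩ := hclosed.closure_subset_iff.2 (image_mono subset_closure) hy
  by_cases hwP : w ∈ P
  · exact absurd hyK (hPK.notMem_of_mem_left (mem_image_of_mem f hwP))
  · exact mem_image_of_mem f (hJ ⟨hw, hwP⟩)

end Components

section PartitionIntervals

instance : LocallyPathConnectedSpace I := (convex_Icc (0 : ℝ) 1).locallyPathConnectedSpace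

variable {P : Set I}

theorem exists_lt_lt_of_mem_connectedComponentIn_compl (hP : IsClosed P) (h0 : 0 ∈ P)
    (h1 : 1 ∈ P) {x w : I} (hw : w ∈ connectedComponentIn Pᶜ x) :
    ∃ a ∈ connectedComponentIn Pᶜ x, ∃ b ∈ connectedComponentIn Pᶜ x, a < w ∧ w < b := by
  have hwP : w ∉ P := connectedComponentIn_subset _ _ hw
  have hw0 : 0 < w := (nonneg' (t := w)).lt_of_ne (fun h => hwP (h ▸ h0))
  have hw1 : w < 1 := (le_one' (t := w)).lt_of_ne (fun h => hwP (h ▸ h1))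
  obtain ⟨l, u, ⟨hlw, hwu⟩, hsub⟩ := (mem_nhds_iff_exists_Ioo_subset' ⟨0, hw0⟩ ⟨1, hw1⟩).1
    (hP.isOpen_compl.connectedComponentIn.mem_nhds hw)
  obtain ⟨a, hla, haw⟩ := exists_between hlw
  obtain ⟨b, hwb, hbu⟩ := exists_between hwu
  exact ⟨a, hsub ⟨hla, haw.trans hwu⟩, b, hsub ⟨hlw.trans hwb, hbu⟩, haw, hwb⟩

theorem connectedComponentIn_compl_subset_image {f : I → I} (hf : Continuous f) (hP : IsClosed P)
    (h0 : 0 ∈ P) (h1 : 1 ∈ P) (hPinv : f '' P ⊆ P) {x y : I}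
    (hstrict : StrictMonoOn f (connectedComponentIn Pᶜ x) ∨
      StrictAntiOn f (connectedComponentIn Pᶜ x))
    (hmeet : (f '' connectedComponentIn Pᶜ x ∩ connectedComponentIn Pᶜ y).Nonempty) :
    connectedComponentIn Pᶜ y ⊆ f '' connectedComponentIn Pᶜ x := by
  refine isPreconnected_connectedComponentIn.subset_image_of_isOpen_image hf
    (hP.isOpen_compl.closure_connectedComponentIn_inter_subset x)
    (disjoint_compl_right.mono hPinv (connectedComponentIn_subset _ _)) ?_ hmeet
  exact isOpen_image_of_strictMonoOn_or_strictAntiOn hstrict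
    (isPreconnected_connectedComponentIn.image f hf.continuousOn).ordConnected
    (fun _ hw => exists_lt_lt_of_mem_connectedComponentIn_compl hP h0 h1 hw)

end PartitionIntervals

theorem cylinder_iterate_homeomorphism_general
    (f : I → I) (hf : Continuous f)
    (hmix : ∀ U V : Set I, IsOpen U → IsOpen V → U.Nonempty → V.Nonempty →
      ∃ n0 : ℕ, ∀ n ≥ n0, (f^[n] '' U ∩ V).Nonempty)
    (P : Set I) (hPclosed : IsClosed P)
    (h0 : (0 : I) ∈ P) (h1 : (1 : I) ∈ P) (hPinv : f '' P ⊆ P)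
    (hmono : ∀ x ∈ Pᶜ, MonotoneOn f (connectedComponentIn Pᶜ x) ∨
      AntitoneOn f (connectedComponentIn Pᶜ x))
    (n : ℕ) (Is : Fin (n + 1) → Set I)
    (hIs : ∀ i, ∃ x ∈ Pᶜ, Is i = connectedComponentIn Pᶜ x)
    (cyl : Set I) (hcyl : cyl = ⋂ i : Fin (n + 1), f^[(i : ℕ)] ⁻¹' Is i)
    (hne : cyl.Nonempty) :
    ∃ e : cyl ≃ₜ Is (Fin.last n), ∀ x : cyl, (e x : I) = f^[n] (x : I) := by
  obtain rfl : cyl = cylinder f Is := hcyl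
  have hord : ∀ i, (Is i).OrdConnected := fun i => by
    obtain ⟨x, -, hx⟩ := hIs i
    exact hx ▸ isPreconnected_connectedComponentIn.ordConnected
  have hstrict : ∀ i, StrictMonoOn f (Is i) ∨ StrictAntiOn f (Is i) := fun i => by
    obtain ⟨x, hxP, hx⟩ := hIs i
    exact hx ▸ IsTopologicallyMixing.strictMonoOn_or_strictAntiOn hmix
      isPreconnected_connectedComponentIn.ordConnected (hmono x hxP)
  have hmarkov : ∀ i j, (f '' Is i ∩ Is j).Nonempty → Is j ⊆ f '' Is i := fun i j => by
    obtain ⟨x, -, hx⟩ := hIs i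
    obtain ⟨y, -, hy⟩ := hIs j
    rw [hx, hy]
    exact connectedComponentIn_compl_subset_image hf hPclosed h0 h1 hPinv (hx ▸ hstrict i)
  have := hord (Fin.last n)
  have := ordConnected_cylinder hord fun i => (hstrict i).imp (·.monotoneOn) (·.antitoneOn)
  exact exists_homeomorph_of_strictMonoOn_or_strictAntiOn
    (strictMonoOn_or_strictAntiOn_iterate_cylinder hstrict) (image_iterate_cylinder hmarkov hne)

/-- Let `f ∈ 𝒞ℳℳ` with partition set `P`.  For partition intervals
`I_0, …, I_n ∈ ℬ(P)` with `[I_0⋯I_n] := I_0 ∩ f^{-1}I_1 ∩ ⋯ ∩ f^{-n}I_n` nonempty,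
the restriction `f^n|_{[I_0⋯I_n]} : [I_0⋯I_n] → I_n` is a homeomorphism. -/
theorem cylinder_iterate_homeomorphism
    (f : I → I) (hf : Continuous f)
    (hmix : ∀ U V : Set I, IsOpen U → IsOpen V → U.Nonempty → V.Nonempty →
      ∃ n0 : ℕ, ∀ n ≥ n0, (f^[n] '' U ∩ V).Nonempty)
    (P : Set I) (hPclosed : IsClosed P) (hPcount : P.Countable)
    (h0 : (0 : I) ∈ P) (h1 : (1 : I) ∈ P) (hPinv : f '' P ⊆ P)
    (hmono : ∀ x ∈ Pᶜ, MonotoneOn f (connectedComponentIn Pᶜ x) ∨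
      AntitoneOn f (connectedComponentIn Pᶜ x))
    (n : ℕ) (Is : Fin (n + 1) → Set I)
    (hIs : ∀ i, ∃ x ∈ Pᶜ, Is i = connectedComponentIn Pᶜ x)
    (cyl : Set I) (hcyl : cyl = ⋂ i : Fin (n + 1), f^[(i : ℕ)] ⁻¹' Is i)
    (hne : cyl.Nonempty) :
    ∃ e : cyl ≃ₜ Is (Fin.last n), ∀ x : cyl, (e x : I) = f^[n] (x : I) :=
  cylinder_iterate_homeomorphism_general f hf hmix P hPclosed h0 h1 hPinv hmono n Is hIs cyl hcyl
    hne
end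

section
/- Let f ∈ 𝒞ℳℳ with partition set P. Then the set of accumulation points of P is forward invariant: f(Acc P) ⊂ Acc P. -/
/-!
If `f x` were not an accumulation point of `P`, then, since `f(P) ⊆ P` and `f` is continuous,
`f` would be constant on `P` near `x`. As `x` accumulates `P`, there are points `p < q` of `P`
near `x`. Each gap of `P` inside `[p, q]` is an interval whose endpoints lie in `P`, and on it the
continuous monotone map `f` is squeezed between its (equal) values at those endpoints. Hence `f`
is constant on the open interval `(p, q)`, which a topologically mixing map cannot be.
-/

open unitInterval Filter

open Set Topology

theorem mem_connectedComponentIn_of_mem_closure {X : Type*} [TopologicalSpace X] {F : Set X}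
    {x y : X} (hy : y ∈ closure (connectedComponentIn F x)) (hyF : y ∈ F) :
    y ∈ connectedComponentIn F x := by
  have hxF : x ∈ F := connectedComponentIn_nonempty_iff.mp (closure_nonempty_iff.mp ⟨y, hy⟩)
  have hpre : IsPreconnected (insert y (connectedComponentIn F x)) :=
    isPreconnected_connectedComponentIn.subset_closure (subset_insert _ _)
      (insert_subset hy subset_closure)
  exact hpre.subset_connectedComponentIn (mem_insert_of_mem _ (mem_connectedComponentIn hxF))
    (insert_subset hyF (connectedComponentIn_subset _ _)) (mem_insert _ _)

section ConnectedComponentBounds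

variable {X : Type*} [ConditionallyCompleteLinearOrder X] [TopologicalSpace X] [OrderTopology X]
  [DenselyOrdered X]

theorem notMem_of_isLUB_connectedComponentIn {F : Set X} (hF : IsOpen F) {x b : X}
    (hb : IsLUB (connectedComponentIn F x) b) (hx : x ∈ F) (hbmax : ¬IsMax b) : b ∉ F := by
  intro hbF
  have hbC : b ∈ connectedComponentIn F x :=
    mem_connectedComponentIn_of_mem_closure
      (hb.mem_closure ⟨x, mem_connectedComponentIn hx⟩) hbF
  obtain ⟨u, hbu, hIco⟩ :=
    exists_Ico_subset_of_mem_nhds (hF.mem_nhds hbF) (not_isMax_iff.mp hbmax)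
  obtain ⟨w, hbw, hwu⟩ := exists_between hbu
  have hIcc : Icc b w ⊆ connectedComponentIn F x := by
    rw [connectedComponentIn_eq hbC]
    exact isPreconnected_Icc.subset_connectedComponentIn (left_mem_Icc.mpr hbw.le)
      ((Icc_subset_Ico_right hwu).trans hIco)
  exact (hb.1 (hIcc (right_mem_Icc.mpr hbw.le))).not_gt hbw

theorem exists_isLUB_connectedComponentIn_compl_mem {P : Set X} (hP : IsClosed P) {z p : X}
    (hz : z ∉ P) (hp : p ∈ P) (hzp : z ≤ p) :
    ∃ b ∈ P, z ≤ b ∧ b ≤ p ∧ IsLUB (connectedComponentIn Pᶜ z) b := by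
  set C := connectedComponentIn Pᶜ z
  have hzC : z ∈ C := mem_connectedComponentIn hz
  have hCp : ∀ c ∈ C, c ≤ p := fun c hc => le_of_not_ge fun hpc =>
    connectedComponentIn_subset _ _
      (isPreconnected_connectedComponentIn.ordConnected.out hzC hc ⟨hzp, hpc⟩) hp
  have hb : IsLUB C (sSup C) := isLUB_csSup ⟨z, hzC⟩ ⟨p, hCp⟩
  refine ⟨sSup C, ?_, hb.1 hzC, csSup_le ⟨z, hzC⟩ hCp, hb⟩
  rcases (csSup_le ⟨z, hzC⟩ hCp).eq_or_lt with hbp | hbp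
  · exact hbp ▸ hp
  · exact not_not.mp (notMem_of_isLUB_connectedComponentIn hP.isOpen_compl hb hz hbp.not_isMax)

theorem exists_isGLB_connectedComponentIn_compl_mem {P : Set X} (hP : IsClosed P) {z p : X}
    (hz : z ∉ P) (hp : p ∈ P) (hpz : p ≤ z) :
    ∃ a ∈ P, p ≤ a ∧ a ≤ z ∧ IsGLB (connectedComponentIn Pᶜ z) a := by
  obtain ⟨a, haP, hza, hap, ha⟩ :=
    exists_isLUB_connectedComponentIn_compl_mem (X := Xᵒᵈ) hP hz hp hpz
  exact ⟨a, haP, hap, hza, ha⟩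

end ConnectedComponentBounds

section MonotoneOnBounds

variable {X Y : Type*} [LinearOrder X] [TopologicalSpace X] [OrderTopology X] [Preorder Y]
  [TopologicalSpace Y] [OrderClosedTopology Y] {f : X → Y} {s : Set X} {z : X}

theorem MonotoneOn.le_of_isLUB {b : X} (hf : MonotoneOn f s) (hb : IsLUB s b)
    (hfb : ContinuousWithinAt f s b) (hz : z ∈ s) : f z ≤ f b :=
  ContinuousWithinAt.closure_le ((hb.inter_Ici_of_mem hz).mem_closure ⟨z, hz, le_rfl⟩)
    continuousWithinAt_const (hfb.mono inter_subset_left) fun _ hy => hf hz hy.1 hy.2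

theorem MonotoneOn.le_of_isGLB {a : X} (hf : MonotoneOn f s) (ha : IsGLB s a)
    (hfa : ContinuousWithinAt f s a) (hz : z ∈ s) : f a ≤ f z :=
  MonotoneOn.le_of_isLUB (X := Xᵒᵈ) (Y := Yᵒᵈ) hf.dual ha hfa hz

end MonotoneOnBounds

def MonotoneOnGaps {X Y : Type*} [TopologicalSpace X] [Preorder X] [Preorder Y] (f : X → Y)
    (P : Set X) : Prop :=
  ∀ x ∈ Pᶜ, MonotoneOn f (connectedComponentIn Pᶜ x) ∨ AntitoneOn f (connectedComponentIn Pᶜ x)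

theorem MonotoneOnGaps.eqOn_Icc {X Y : Type*} [ConditionallyCompleteLinearOrder X]
    [TopologicalSpace X] [OrderTopology X] [DenselyOrdered X] [PartialOrder Y]
    [TopologicalSpace Y] [OrderClosedTopology Y] {f : X → Y} {P : Set X}
    (hf : MonotoneOnGaps f P) (hcont : Continuous f) (hP : IsClosed P) {p q : X} (hp : p ∈ P)
    (hq : q ∈ P) {c : Y} (hc : EqOn f (fun _ => c) (P ∩ Icc p q)) :
    EqOn f (fun _ => c) (Icc p q) := by
  intro z hz
  by_cases hzP : z ∈ P
  · exact hc ⟨hzP, hz⟩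
  have hzC : z ∈ connectedComponentIn Pᶜ z := mem_connectedComponentIn hzP
  obtain ⟨a, haP, hpa, haz, ha⟩ := exists_isGLB_connectedComponentIn_compl_mem hP hzP hp hz.1
  obtain ⟨b, hbP, hzb, hbq, hb⟩ := exists_isLUB_connectedComponentIn_compl_mem hP hzP hq hz.2
  have hfa : f a = c := hc ⟨haP, hpa, haz.trans hz.2⟩
  have hfb : f b = c := hc ⟨hbP, hz.1.trans hzb, hbq⟩
  rcases hf z hzP with hmono | hanti
  · exact le_antisymm (hfb ▸ hmono.le_of_isLUB hb hcont.continuousWithinAt hzC)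
      (hfa ▸ hmono.le_of_isGLB ha hcont.continuousWithinAt hzC)
  · exact le_antisymm (hfa ▸ hanti.dual_right.le_of_isGLB ha hcont.continuousWithinAt hzC)
      (hfb ▸ hanti.dual_right.le_of_isLUB hb hcont.continuousWithinAt hzC)

def TopologicallyMixing {X : Type*} [TopologicalSpace X] (f : X → X) : Prop :=
  ∀ U V : Set X, IsOpen U → IsOpen V → U.Nonempty → V.Nonempty →
    ∃ n0 : ℕ, ∀ n ≥ n0, (f^[n] '' U ∩ V).Nonempty

theorem TopologicallyMixing.image_nontrivial {X : Type*} [TopologicalSpace X] [T2Space X]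
    [Nontrivial X] {f : X → X} (hf : TopologicallyMixing f) {U : Set X} (hU : IsOpen U)
    (hne : U.Nonempty) : (f '' U).Nontrivial := by
  obtain ⟨x, y, hxy⟩ := exists_pair_ne X
  obtain ⟨V, W, hV, hW, hxV, hyW, hVW⟩ := t2_separation hxy
  obtain ⟨m, hm⟩ := hf U V hU hV hne ⟨x, hxV⟩
  obtain ⟨n, hn⟩ := hf U W hU hW hne ⟨y, hyW⟩
  obtain ⟨v, hv, hvV⟩ := hm (max m n + 1) (by omega)
  obtain ⟨w, hw, hwW⟩ := hn (max m n + 1) (by omega)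
  rw [Function.iterate_succ, image_comp] at hv hw
  by_contra hsub
  have hsingle : (f^[max m n] '' (f '' U)).Subsingleton := (not_nontrivial_iff.mp hsub).image _
  exact hVW.ne_of_mem hvV hwW (hsingle hv hw)

theorem AccPt.exists_Icc_subset {X : Type*} [LinearOrder X] [TopologicalSpace X]
    [OrderTopology X] {P U : Set X} {x : X} (hx : AccPt x (𝓟 P)) (hU : U ∈ 𝓝 x) :
    ∃ p ∈ P, ∃ q ∈ P, p < q ∧ Icc p q ⊆ U := by
  have hU' : U.ordConnectedComponent x ∈ 𝓝 x := ordConnectedComponent_mem_nhds.mpr hU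
  have hord : (U.ordConnectedComponent x).OrdConnected := inferInstance
  rw [accPt_iff_nhds] at hx
  obtain ⟨y, ⟨hyU, hyP⟩, hyx⟩ := hx _ hU'
  obtain ⟨z, ⟨⟨hzU, hzy⟩, hzP⟩, -⟩ := hx _ (inter_mem hU' (compl_singleton_mem_nhds hyx.symm))
  rcases lt_or_gt_of_ne (mem_compl_singleton_iff.mp hzy) with hzy | hyz
  · exact ⟨z, hzP, y, hyP, hzy, (hord.out hzU hyU).trans ordConnectedComponent_subset⟩
  · exact ⟨y, hyP, z, hzP, hyz, (hord.out hyU hzU).trans ordConnectedComponent_subset⟩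

theorem eventually_nhdsWithin_eq_of_not_accPt_image {X Y : Type*} [TopologicalSpace X]
    [TopologicalSpace Y] {f : X → Y} {P : Set X} {Q : Set Y} {x : X} (hf : ContinuousAt f x)
    (hPQ : MapsTo f P Q) (hfx : ¬AccPt (f x) (𝓟 Q)) : ∀ᶠ p in 𝓝[P] x, f p = f x := by
  rw [accPt_iff_nhds] at hfx
  push Not at hfx
  obtain ⟨V, hV, hVQ⟩ := hfx
  exact mem_nhdsWithin_iff_exists_mem_nhds_inter.mpr
    ⟨f ⁻¹' V, hf.preimage_mem_nhds hV, fun p hp => hVQ (f p) ⟨hp.1, hPQ hp.2⟩⟩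

theorem image_accumulation_points_subset_general
    (f : I → I) (hf : Continuous f)
    (hmix : ∀ U V : Set I, IsOpen U → IsOpen V → U.Nonempty → V.Nonempty →
      ∃ n0 : ℕ, ∀ n ≥ n0, (f^[n] '' U ∩ V).Nonempty)
    (P : Set I) (hPclosed : IsClosed P)
    (hPinv : f '' P ⊆ P)
    (hmono : ∀ x ∈ Pᶜ, MonotoneOn f (connectedComponentIn Pᶜ x) ∨
      AntitoneOn f (connectedComponentIn Pᶜ x)) :
    f '' {x : I | AccPt x (Filter.principal P)} ⊆ {x : I | AccPt x (Filter.principal P)} := by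
  rintro _ ⟨x, hx, rfl⟩
  by_contra hfx
  obtain ⟨U, hU, hUP⟩ := mem_nhdsWithin_iff_exists_mem_nhds_inter.mp <|
    eventually_nhdsWithin_eq_of_not_accPt_image hf.continuousAt
      (mapsTo_iff_image_subset.mpr hPinv) hfx
  obtain ⟨p, hp, q, hq, hpq, hpqU⟩ := hx.exists_Icc_subset hU
  have hconst : EqOn f (fun _ => f x) (Icc p q) :=
    MonotoneOnGaps.eqOn_Icc hmono hf hPclosed hp hq fun z hz => hUP ⟨hpqU hz.2, hz.1⟩
  obtain ⟨_, ⟨u, hu, rfl⟩, _, ⟨v, hv, rfl⟩, huv⟩ :=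
    TopologicallyMixing.image_nontrivial hmix isOpen_Ioo (nonempty_Ioo.mpr hpq)
  exact huv ((hconst (Ioo_subset_Icc_self hu)).trans (hconst (Ioo_subset_Icc_self hv)).symm)

/-- Let `f ∈ 𝒞ℳℳ` with partition set `P`.  Then the set of accumulation points of `P`
is forward invariant: `f(Acc P) ⊆ Acc P`. -/
theorem image_accumulation_points_subset
    (f : I → I) (hf : Continuous f)
    (hmix : ∀ U V : Set I, IsOpen U → IsOpen V → U.Nonempty → V.Nonempty →
      ∃ n0 : ℕ, ∀ n ≥ n0, (f^[n] '' U ∩ V).Nonempty)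
    (P : Set I) (hPclosed : IsClosed P) (hPcount : P.Countable)
    (h0 : (0 : I) ∈ P) (h1 : (1 : I) ∈ P) (hPinv : f '' P ⊆ P)
    (hmono : ∀ x ∈ Pᶜ, MonotoneOn f (connectedComponentIn Pᶜ x) ∨
      AntitoneOn f (connectedComponentIn Pᶜ x)) :
    f '' {x : I | AccPt x (Filter.principal P)} ⊆ {x : I | AccPt x (Filter.principal P)} :=
  image_accumulation_points_subset_general f hf hmix P hPclosed hPinv hmono
end

section
/- Let f ∈ 𝒞ℳℳ with partition set P. If there exists a homeomorphism ψ of [0,1] such that g = ψ∘f∘ψ^{-1} is λ-Lipschitz, then the transition matrix A(f,P) admits a summable λ-subeigenvector, namely v_I = |ψ(I)| for I ∈ ℬ(P). -/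
/-!
Since `ψ` is injective, the sets `ψ(J)`, `J ∈ ℬ(P)`, are pairwise disjoint intervals of `[0,1]`, so
their lengths add up to at most the Lebesgue measure of their union. Hence `Σ_J |ψ(J)| ≤ 1`, and
`Σ_{J ⊆ f(I)} |ψ(J)| ≤ |ψ(f(I))| = |g(ψ(I))| ≤ λ |ψ(I)|`.
-/

open unitInterval MeasureTheory Set Metric Function
open scoped ENNReal NNReal

/-- The set of partition intervals `ℬ(P)`: connected components of `[0,1] ∖ P`. -/
def PartitionInterval (P : Set I) : Type :=
  {C : Set I // ∃ x ∈ Pᶜ, C = connectedComponentIn Pᶜ x}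

theorem IsPreconnected.ediam_le_volume {s : Set ℝ} (hs : IsPreconnected s)
    (hb : Bornology.IsBounded s) : ediam s ≤ volume s := by
  rcases s.eq_empty_or_nonempty with rfl | hne
  · simp
  calc ediam s = volume (Ioo (sInf s) (sSup s)) := by rw [Real.ediam_eq hb, Real.volume_Ioo]
    _ ≤ volume s := measure_mono
        (IsConnected.Ioo_csInf_csSup_subset ⟨hne, hs⟩ hb.bddBelow hb.bddAbove)

theorem Real.tsum_ediam_le_ediam_of_pairwise_disjoint {ι : Type*} {s : ι → Set ℝ} {t : Set ℝ}
    (hs : ∀ i, IsPreconnected (s i)) (hd : Pairwise (Disjoint on s)) (hst : ∀ i, s i ⊆ t) :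
    ∑' i, ediam (s i) ≤ ediam t := by
  by_cases ht : Bornology.IsBounded t
  swap
  · rw [ediam_of_unbounded ht]
    exact le_top
  calc ∑' i, ediam (s i) ≤ ∑' i, volume (s i) :=
        ENNReal.tsum_le_tsum fun i => (hs i).ediam_le_volume (ht.subset (hst i))
    _ ≤ volume (⋃ i, s i) :=
        tsum_meas_le_meas_iUnion_of_disjoint₀ volume
          (fun i => (hs i).ordConnected.measurableSet.nullMeasurableSet)
          fun _ _ h => (hd h).aedisjoint
    _ ≤ volume t := measure_mono (iUnion_subset hst)
    _ ≤ ediam t := Real.volume_le_diam t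

theorem Isometry.tsum_ediam_le_ediam_of_pairwise_disjoint {α ι : Type*} [EMetricSpace α]
    {e : α → ℝ} (he : Isometry e) {s : ι → Set α} {t : Set α}
    (hs : ∀ i, IsPreconnected (s i)) (hd : Pairwise (Disjoint on s)) (hst : ∀ i, s i ⊆ t) :
    ∑' i, ediam (s i) ≤ ediam t := by
  simp only [← he.ediam_image]
  exact Real.tsum_ediam_le_ediam_of_pairwise_disjoint
    (fun i => (hs i).image e he.continuous.continuousOn)
    (fun i j hij => (disjoint_image_iff he.injective).2 (hd hij))
    fun i => image_mono (hst i)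

namespace PartitionInterval

variable {P : Set I}

theorem isPreconnected (C : PartitionInterval P) : IsPreconnected C.1 := by
  obtain ⟨x, -, hC⟩ := C.2
  exact hC ▸ isPreconnected_connectedComponentIn

theorem pairwise_disjoint : Pairwise (Disjoint on fun C : PartitionInterval P => C.1) := by
  intro C D hCD
  obtain ⟨x, -, hC⟩ := C.2
  obtain ⟨y, -, hD⟩ := D.2
  refine not_not.1 fun h : ¬Disjoint C.1 D.1 => hCD (Subtype.ext ?_)
  obtain ⟨z, hzC, hzD⟩ := not_disjoint_iff.1 h
  rw [hC] at hzC ⊢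
  rw [hD] at hzD ⊢
  exact (connectedComponentIn_eq hzC).trans (connectedComponentIn_eq hzD).symm

theorem tsum_ediam_image_le_ediam_image {ψ : I → I} (hψ : Continuous ψ)
    (hψ_inj : Injective ψ) (S : Set (PartitionInterval P)) {t : Set I}
    (hSt : ∀ C ∈ S, C.1 ⊆ t) :
    ∑' C : S, ediam (ψ '' C.1.1) ≤ ediam (ψ '' t) :=
  Isometry.tsum_ediam_le_ediam_of_pairwise_disjoint isometry_subtype_coe
    (fun C => C.1.isPreconnected.image ψ hψ.continuousOn)
    (fun _ _ hCD => (disjoint_image_iff hψ_inj).2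
      (pairwise_disjoint (Subtype.coe_injective.ne hCD)))
    fun C => image_mono (hSt C.1 C.2)

end PartitionInterval

open scoped Classical in
theorem summable_subeigenvector_of_conjugate_lipschitz_general
    (f : I → I)
    (P : Set I)
    (lam : ℝ≥0) (ψ : I ≃ₜ I) (hlip : LipschitzWith lam (⇑ψ ∘ f ∘ ⇑ψ.symm)) :
    (∑' C : PartitionInterval P, EMetric.diam (ψ '' C.1) ≠ ⊤) ∧
      ∀ C : PartitionInterval P,
        ∑' D : PartitionInterval P,
            (if D.1 ⊆ f '' C.1 then (1 : ℝ≥0∞) else 0) * EMetric.diam (ψ '' D.1) ≤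
          (lam : ℝ≥0∞) * EMetric.diam (ψ '' C.1) := by
  have hsum := PartitionInterval.tsum_ediam_image_le_ediam_image (P := P) ψ.continuous ψ.injective
  refine ⟨?_, fun C => ?_⟩
  · rw [← tsum_univ]
    exact ne_top_of_le_ne_top (Bornology.IsBounded.all _).ediam_ne_top
      (hsum univ fun C _ => subset_univ C.1)
  have hconj : ψ '' (f '' C.1) = (ψ ∘ f ∘ ψ.symm) '' (ψ '' C.1) := by
    simp [image_image]
  calc ∑' D : PartitionInterval P,
        (if D.1 ⊆ f '' C.1 then (1 : ℝ≥0∞) else 0) * EMetric.diam (ψ '' D.1)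
      = ∑' D : {D : PartitionInterval P | D.1 ⊆ f '' C.1}, ediam (ψ '' D.1.1) := by
        rw [tsum_subtype _ fun D : PartitionInterval P => ediam (ψ '' D.1)]
        simp only [ite_mul, one_mul, zero_mul, indicator, mem_setOf_eq]
        rfl
    _ ≤ ediam (ψ '' (f '' C.1)) := hsum _ fun _ hD => hD
    _ ≤ lam * ediam (ψ '' C.1) := hconj ▸ hlip.ediam_image_le _

open scoped Classical in
/-- Let `f ∈ 𝒞ℳℳ` with partition set `P`.  If some homeomorphism `ψ` of `[0,1]`
makes `g = ψ∘f∘ψ⁻¹` `λ`-Lipschitz, then the transition matrix `A(f,P)` admits a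
summable `λ`-subeigenvector, namely `v_I = |ψ(I)|` for `I ∈ ℬ(P)`. -/
theorem summable_subeigenvector_of_conjugate_lipschitz
    (f : I → I) (hf : Continuous f)
    (hmix : ∀ U V : Set I, IsOpen U → IsOpen V → U.Nonempty → V.Nonempty →
      ∃ n0 : ℕ, ∀ n ≥ n0, (f^[n] '' U ∩ V).Nonempty)
    (P : Set I) (hPclosed : IsClosed P) (hPcount : P.Countable)
    (h0 : (0 : I) ∈ P) (h1 : (1 : I) ∈ P) (hPinv : f '' P ⊆ P)
    (hmono : ∀ x ∈ Pᶜ, MonotoneOn f (connectedComponentIn Pᶜ x) ∨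
      AntitoneOn f (connectedComponentIn Pᶜ x))
    (lam : ℝ≥0) (ψ : I ≃ₜ I) (hlip : LipschitzWith lam (⇑ψ ∘ f ∘ ⇑ψ.symm)) :
    (∑' C : PartitionInterval P, EMetric.diam (ψ '' C.1) ≠ ⊤) ∧
      ∀ C : PartitionInterval P,
        ∑' D : PartitionInterval P,
            (if D.1 ⊆ f '' C.1 then (1 : ℝ≥0∞) else 0) * EMetric.diam (ψ '' D.1) ≤
          (lam : ℝ≥0∞) * EMetric.diam (ψ '' C.1) :=
  summable_subeigenvector_of_conjugate_lipschitz_general f P lam ψ hlip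
end

section
/- In a transitive countable-state topological Markov chain Σ, if the reverse Salama entropy exceeds the Gurevich entropy, then for any fixed vertex a, h_RevSal(Σ) = limsup_{n→∞} (1/n) log (number of length-n first-entrance paths to a), where a first-entrance path to a of length n is a path [i_0⋯i_n] with i_n = a and i_j ≠ a for 0 ≤ j ≤ n−1. -/
open Filter
open scoped ENNReal

/-- `w : Fin (n+1) → S` is a path in the graph of the relation `R`. -/
def IsPath {S : Type*} (R : S → S → Prop) {n : ℕ} (w : Fin (n + 1) → S) : Prop :=
  ∀ i : Fin n, R (w i.castSucc) (w i.succ)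

/-!
Cutting a path that ends at `a` at its first visit to `a` writes it as a first-entrance path
followed by a loop at `a`. Hence the number of paths of length `n` ending at `a` is at most the
convolution of the first-entrance and loop counts, and a convolution grows at most at the larger
of the two exponential rates. Loops grow at the Gurevich rate, strictly slower than paths ending
at `a`, so the first-entrance paths must carry the whole reverse Salama rate.

Infinite counts need separate care: appending a fixed loop shows that infinitely many loops of
one length would give infinitely many loops of infinitely many lengths, and prepending a
predecessor shows the same for first-entrance paths once loop counts are finite; in both cases
the rate would be `⊤`.
-/

namespace MarkovShift

noncomputable def growthRate (X : ℕ → ℝ≥0∞) : EReal :=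
  limsup (fun n : ℕ => ENNReal.log (X n) / (n : EReal)) atTop

lemma growthRate_mono {X Y : ℕ → ℝ≥0∞} (h : ∀ n, X n ≤ Y n) : growthRate X ≤ growthRate Y :=
  limsup_le_limsup <| .of_forall fun n =>
    EReal.div_le_div_right_of_nonneg (by positivity) (ENNReal.log_monotone (h n))

lemma growthRate_eq_top_of_frequently {X : ℕ → ℝ≥0∞} (h : ∃ᶠ n in atTop, X n = ⊤) :
    growthRate X = ⊤ := by
  refine top_unique (le_limsup_of_frequently_le ?_)
  refine (h.and_eventually (eventually_gt_atTop 0)).mono fun n ⟨hX, hn⟩ => ?_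
  rw [hX, ENNReal.log_top,
    EReal.top_div_of_pos_ne_top (by exact_mod_cast hn) (EReal.natCast_ne_top n)]

lemma log_div_natCast_le_iff {x : ℝ≥0∞} {c : ℝ} {n : ℕ} (hn : 0 < n) :
    ENNReal.log x / n ≤ c ↔ x ≤ ENNReal.ofReal (Real.exp (c * n)) := by
  rw [EReal.div_le_iff_le_mul (by exact_mod_cast hn) (EReal.natCast_ne_top n), ← EReal.exp_coe,
    ← ENNReal.log_le_log_iff, EReal.log_exp, mul_comm]
  norm_cast

lemma growthRate_le_of_eventually_le {X : ℕ → ℝ≥0∞} {c : ℝ}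
    (h : ∀ᶠ n in atTop, X n ≤ ENNReal.ofReal (Real.exp (c * n))) : growthRate X ≤ c :=
  limsup_le_of_le (by isBoundedDefault) <|
    (h.and (eventually_gt_atTop 0)).mono fun _ ⟨hX, hn⟩ => (log_div_natCast_le_iff hn).2 hX

lemma eventually_le_of_growthRate_lt {X : ℕ → ℝ≥0∞} {c : ℝ} (h : growthRate X < c) :
    ∀ᶠ n in atTop, X n ≤ ENNReal.ofReal (Real.exp (c * n)) :=
  ((eventually_lt_of_limsup_lt h).and (eventually_gt_atTop 0)).mono fun _ ⟨hX, hn⟩ =>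
    (log_div_natCast_le_iff hn).1 hX.le

lemma exists_le_mul_exp_of_growthRate_lt {X : ℕ → ℝ≥0∞} (hX : ∀ n, X n ≠ ⊤) {c : ℝ}
    (h : growthRate X < c) :
    ∃ C ≠ ⊤, ∀ n, X n ≤ C * ENNReal.ofReal (Real.exp (c * n)) := by
  obtain ⟨N, hN⟩ := eventually_atTop.1 (eventually_le_of_growthRate_lt h)
  have hexp (n : ℕ) : ENNReal.ofReal (Real.exp (c * n)) ≠ 0 := by positivity
  refine ⟨1 + ∑ k ∈ Finset.range N, X k / ENNReal.ofReal (Real.exp (c * k)), ?_, fun n => ?_⟩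
  · exact ENNReal.add_ne_top.2 ⟨ENNReal.one_ne_top, ENNReal.sum_ne_top.2 fun k _ =>
      ENNReal.div_ne_top (hX k) (hexp k)⟩
  rcases lt_or_ge n N with hn | hn
  · calc X n = X n / ENNReal.ofReal (Real.exp (c * n)) * ENNReal.ofReal (Real.exp (c * n)) :=
          (ENNReal.div_mul_cancel (hexp n) ENNReal.ofReal_ne_top).symm
      _ ≤ _ := by
        gcongr
        exact le_add_left (Finset.single_le_sum_of_canonicallyOrdered
          (f := fun k => X k / ENNReal.ofReal (Real.exp (c * k))) (Finset.mem_range.2 hn))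
  · exact (hN n hn).trans (le_mul_of_one_le_left' le_self_add)

lemma eventually_add_one_mul_le_exp {ε : ℝ} (hε : 0 < ε) (M : ℝ) :
    ∀ᶠ n : ℕ in atTop, (n + 1) * M ≤ Real.exp (ε * n) := by
  have h := (tendsto_exp_mul_div_rpow_atTop 1 ε hε).comp tendsto_natCast_atTop_atTop
  filter_upwards [h.eventually_ge_atTop (2 * |M|), eventually_ge_atTop 1] with n hn hn1
  have hn1' : (1 : ℝ) ≤ n := by exact_mod_cast hn1
  simp only [Function.comp, Real.rpow_one] at hn
  rw [le_div_iff₀ (by positivity)] at hn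
  nlinarith [le_abs_self M, abs_nonneg M]

lemma growthRate_le_of_le_add_one_mul_exp {X : ℕ → ℝ≥0∞} {C : ℝ≥0∞} (hC : C ≠ ⊤) {c : ℝ}
    (h : ∀ n, X n ≤ (n + 1) * C * ENNReal.ofReal (Real.exp (c * n))) : growthRate X ≤ c := by
  refine EReal.le_of_forall_lt_iff_le.1 fun c' hc' => growthRate_le_of_eventually_le ?_
  have hcc' : 0 < c' - c := sub_pos.2 (by exact_mod_cast hc')
  filter_upwards [eventually_add_one_mul_le_exp hcc' C.toReal] with n hn
  calc X n ≤ (n + 1) * C * ENNReal.ofReal (Real.exp (c * n)) := h n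
    _ = ENNReal.ofReal ((n + 1) * C.toReal) * ENNReal.ofReal (Real.exp (c * n)) := by
        rw [ENNReal.ofReal_mul (by positivity), ENNReal.ofReal_toReal hC]
        norm_cast
    _ ≤ ENNReal.ofReal (Real.exp ((c' - c) * n)) * ENNReal.ofReal (Real.exp (c * n)) := by
        gcongr
    _ = ENNReal.ofReal (Real.exp (c' * n)) := by
        rw [← ENNReal.ofReal_mul (by positivity), ← Real.exp_add]
        ring_nf

lemma growthRate_le_max_of_le_sum_mul {F L P : ℕ → ℝ≥0∞} (hF : ∀ n, F n ≠ ⊤) (hL : ∀ n, L n ≠ ⊤)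
    (hP : ∀ n, P n ≤ ∑ j ∈ Finset.range (n + 1), F j * L (n - j)) :
    growthRate P ≤ max (growthRate F) (growthRate L) := by
  refine EReal.le_of_forall_lt_iff_le.1 fun c hc => ?_
  obtain ⟨CF, hCF, hFc⟩ := exists_le_mul_exp_of_growthRate_lt hF ((le_max_left _ _).trans_lt hc)
  obtain ⟨CL, hCL, hLc⟩ := exists_le_mul_exp_of_growthRate_lt hL ((le_max_right _ _).trans_lt hc)
  refine growthRate_le_of_le_add_one_mul_exp (ENNReal.mul_ne_top hCF hCL) fun n => ?_
  calc P n ≤ ∑ j ∈ Finset.range (n + 1), F j * L (n - j) := hP n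
    _ ≤ ∑ j ∈ Finset.range (n + 1), CF * CL * ENNReal.ofReal (Real.exp (c * n)) := by
        refine Finset.sum_le_sum fun j hj => ?_
        have hjn : j ≤ n := Nat.lt_succ_iff.1 (Finset.mem_range.1 hj)
        calc F j * L (n - j)
            ≤ CF * ENNReal.ofReal (Real.exp (c * j)) *
                (CL * ENNReal.ofReal (Real.exp (c * (n - j : ℕ)))) := by
              gcongr
              exacts [hFc j, hLc (n - j)]
          _ = CF * CL * ENNReal.ofReal (Real.exp (c * n)) := by
              rw [mul_mul_mul_comm, ← ENNReal.ofReal_mul (by positivity), ← Real.exp_add,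
                Nat.cast_sub hjn]
              ring_nf
    _ = (n + 1) * (CF * CL) * ENNReal.ofReal (Real.exp (c * n)) := by
        rw [Finset.sum_const, Finset.card_range, nsmul_eq_mul, mul_assoc]
        push_cast
        ring

lemma frequently_eq_top_of_le_add {X : ℕ → ℝ≥0∞} {d : ℕ} (hd : 0 < d)
    (hX : ∀ n, X n ≤ X (n + d)) {k : ℕ} (hk : X k = ⊤) : ∃ᶠ n in atTop, X n = ⊤ := by
  have htop (t : ℕ) : X (k + t * d) = ⊤ := by
    induction t with
    | zero => simpa using hk
    | succ t ih => rw [add_one_mul, ← add_assoc]; exact top_unique (ih ▸ hX _)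
  exact frequently_atTop.2 fun N => ⟨k + N * d, by nlinarith, htop N⟩

lemma eventually_eq_top_of_le_add_succ {X Y : ℕ → ℝ≥0∞} (hX : ∀ n, X n ≤ X (n + 1) + Y (n + 1))
    (hY : ∀ n, Y n ≠ ⊤) {k : ℕ} (hk : X k = ⊤) : ∀ᶠ n in atTop, X n = ⊤ := by
  refine eventually_atTop.2 ⟨k, fun n hn => ?_⟩
  induction n, hn using Nat.le_induction with
  | base => exact hk
  | succ n _ ih =>
    exact (ENNReal.add_eq_top.1 (top_unique (ih ▸ hX n))).resolve_right (hY _)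

theorem growthRate_eq_of_le_sum_mul {F L P : ℕ → ℝ≥0∞} (hFP : ∀ n, F n ≤ P n)
    (hP : ∀ n, P n ≤ ∑ j ∈ Finset.range (n + 1), F j * L (n - j))
    (hF : ∀ n, F n ≤ F (n + 1) + L (n + 1)) {d : ℕ} (hd : 0 < d) (hL : ∀ n, L n ≤ L (n + d))
    (hLP : growthRate L < growthRate P) : growthRate P = growthRate F := by
  have hLfin (k : ℕ) : L k ≠ ⊤ := fun hk =>
    not_top_lt (growthRate_eq_top_of_frequently (frequently_eq_top_of_le_add hd hL hk) ▸ hLP)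
  refine le_antisymm ?_ (growthRate_mono hFP)
  by_cases hFfin : ∀ n, F n ≠ ⊤
  · exact (le_max_iff.1 (growthRate_le_max_of_le_sum_mul hFfin hLfin hP)).resolve_right
      hLP.not_ge
  · obtain ⟨k, hk⟩ := not_forall_not.1 hFfin
    rw [growthRate_eq_top_of_frequently (eventually_eq_top_of_le_add_succ hF hLfin hk).frequently]
    exact le_top

variable {S : Type*} {R : S → S → Prop}

lemma isPath_iff_forall_lt {n : ℕ} {w : Fin (n + 1) → S} :
    IsPath R w ↔ ∀ k (hk : k < n), R (w ⟨k, by omega⟩) (w ⟨k + 1, by omega⟩) :=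
  ⟨fun h k hk => h ⟨k, hk⟩, fun h i => h i.1 i.2⟩

lemma isPath_cons_iff {n : ℕ} {u : S} {w : Fin (n + 1) → S} :
    IsPath R (Fin.cons u w : Fin (n + 2) → S) ↔ R u (w 0) ∧ IsPath R w := by
  simp [IsPath, Fin.forall_fin_succ]

def segment {n : ℕ} (w : Fin (n + 1) → S) (j m : ℕ) (h : j + m ≤ n) : Fin (m + 1) → S :=
  fun i => w ⟨j + i, by omega⟩

lemma isPath_segment {n : ℕ} {w : Fin (n + 1) → S} (hw : IsPath R w) (j m : ℕ) (h : j + m ≤ n) :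
    IsPath R (segment w j m h) :=
  fun i => isPath_iff_forall_lt.1 hw (j + i) (by omega)

lemma segment_prod_segment_injective {n j m : ℕ} (h : j + m = n) :
    Function.Injective fun w : Fin (n + 1) → S =>
      (segment w 0 j (by omega), segment w j m h.le) := by
  intro w w' hww'
  simp only [Prod.mk.injEq] at hww'
  ext ⟨i, hi⟩
  rcases le_or_gt i j with hij | hij
  · simpa [segment] using congrFun hww'.1 ⟨i, by omega⟩
  · simpa [segment, Nat.add_sub_cancel' hij.le] using congrFun hww'.2 ⟨i - j, by omega⟩

def join {m d : ℕ} (w : Fin (m + 1) → S) (v : Fin (d + 1) → S) : Fin (m + d + 1) → S :=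
  fun i => if h : i.1 ≤ m then w ⟨i, by omega⟩ else v ⟨i - m, by omega⟩

lemma join_last {m d : ℕ} (w : Fin (m + 1) → S) (v : Fin (d + 1) → S)
    (hwv : w (Fin.last m) = v 0) : join w v (Fin.last (m + d)) = v (Fin.last d) := by
  unfold join
  split_ifs with h
  · obtain rfl : d = 0 := by simp at h; omega
    exact hwv
  · congr 1; ext; simp

lemma segment_join_left {m d : ℕ} (w : Fin (m + 1) → S) (v : Fin (d + 1) → S) :
    segment (join w v) 0 m (by omega) = w := by
  ext i
  simp [segment, join, Nat.lt_succ_iff.1 i.2]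

lemma isPath_join {m d : ℕ} {w : Fin (m + 1) → S} {v : Fin (d + 1) → S} (hw : IsPath R w)
    (hv : IsPath R v) (hwv : w (Fin.last m) = v 0) : IsPath R (join w v) := by
  rw [isPath_iff_forall_lt] at hw hv ⊢
  intro k hk
  rcases lt_trichotomy k m with hkm | rfl | hkm
  · simpa [join, hkm.le, Nat.succ_le_of_lt hkm] using hw k hkm
  · simpa [join, ← hwv, Fin.last] using hv 0 (by omega)
  · simpa [join, hkm.not_ge, (hkm.trans (Nat.lt_succ_self k)).not_ge, Nat.sub_add_comm hkm.le]
      using hv (k - m) (by omega)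

variable (R) (a : S)

def pathsTo (n : ℕ) : Set (Fin (n + 1) → S) := {w | w (Fin.last n) = a ∧ IsPath R w}

def loops (n : ℕ) : Set (Fin (n + 1) → S) := {w | w 0 = a ∧ w (Fin.last n) = a ∧ IsPath R w}

def firstEntrancePaths (n : ℕ) : Set (Fin (n + 1) → S) :=
  {w | w (Fin.last n) = a ∧ (∀ i : Fin n, w i.castSucc ≠ a) ∧ IsPath R w}

lemma firstEntrancePaths_subset_pathsTo (n : ℕ) : firstEntrancePaths R a n ⊆ pathsTo R a n :=
  fun _ hw => ⟨hw.1, hw.2.2⟩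

lemma encard_pathsTo_le_sum (n : ℕ) :
    (pathsTo R a n).encard ≤ ∑ j ∈ Finset.range (n + 1),
      (firstEntrancePaths R a j).encard * (loops R a (n - j)).encard := by
  let split (j : Fin (n + 1)) (w : Fin (n + 1) → S) :=
    (segment w 0 j (by omega), segment w j (n - j) (by omega))
  have hcover : pathsTo R a n ⊆
      ⋃ j, split j ⁻¹' (firstEntrancePaths R a j ×ˢ loops R a (n - j)) := by
    rintro w ⟨hlast, hw⟩
    obtain ⟨j, hja, hmin⟩ := wellFounded_lt.has_min {i : Fin (n + 1) | w i = a} ⟨_, hlast⟩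
    refine Set.mem_iUnion.2 ⟨j, ⟨?_, ?_, isPath_segment hw _ _ (by omega)⟩,
      ?_, ?_, isPath_segment hw _ _ (by omega)⟩
    · simpa [split, segment] using hja
    · exact fun i hi =>
        hmin ⟨i, by omega⟩ (by simpa [split, segment] using hi) (by simp [Fin.lt_def])
    · simpa [split, segment] using hja
    · simpa [split, segment, Nat.add_sub_cancel' (Nat.lt_succ_iff.1 j.2), Fin.last] using hlast
  calc (pathsTo R a n).encard
      ≤ ∑ j, (split j ⁻¹' (firstEntrancePaths R a j ×ˢ loops R a (n - j))).encard :=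
        (Set.encard_mono hcover).trans (Set.encard_iUnion_le_of_fintype _)
    _ ≤ ∑ j : Fin (n + 1), (firstEntrancePaths R a j).encard * (loops R a (n - j)).encard := by
        gcongr with j
        rw [← Set.encard_prod]
        exact Set.encard_le_encard_of_injOn (Set.mapsTo_preimage _ _)
          (segment_prod_segment_injective (Nat.add_sub_cancel' (Nat.lt_succ_iff.1 j.2))).injOn
    _ = _ := Fin.sum_univ_eq_sum_range
          (fun j => (firstEntrancePaths R a j).encard * (loops R a (n - j)).encard) _

lemma encard_firstEntrancePaths_le (hR : ∀ v, ∃ u, R u v) (n : ℕ) :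
    (firstEntrancePaths R a n).encard ≤
      (firstEntrancePaths R a (n + 1)).encard + (loops R a (n + 1)).encard := by
  choose pred hpred using hR
  refine (Set.encard_le_encard_of_injOn (s := firstEntrancePaths R a n)
    (f := fun w => (Fin.cons (pred (w 0)) w : Fin (n + 2) → S)) ?_ ?_).trans
    (Set.encard_union_le _ _)
  · rintro w ⟨hlast, hne, hw⟩
    have hpath : IsPath R (Fin.cons (pred (w 0)) w : Fin (n + 2) → S) :=
      isPath_cons_iff.2 ⟨hpred _, hw⟩
    by_cases hu : pred (w 0) = a
    · exact Or.inr ⟨hu, by simpa [Fin.cons_last] using hlast, hpath⟩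
    · refine Or.inl ⟨by simpa [Fin.cons_last] using hlast, ?_, hpath⟩
      simpa [Fin.forall_fin_succ, ← Fin.succ_castSucc, hu] using hne
  · intro w _ w' _ h
    simpa using congrArg Fin.tail h

lemma encard_loops_le_add {d : ℕ} {v : Fin (d + 1) → S} (hv : v ∈ loops R a d) (m : ℕ) :
    (loops R a m).encard ≤ (loops R a (m + d)).encard := by
  refine Set.encard_le_encard_of_injOn (f := fun w => join w v) ?_ ?_
  · rintro w ⟨h0, hlast, hw⟩
    have hwv : w (Fin.last m) = v 0 := hlast.trans hv.1.symm
    exact ⟨h0, (join_last w v hwv).trans hv.2.1, isPath_join hw hv.2.2 hwv⟩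
  · intro w _ w' _ h
    simpa [segment_join_left] using congrArg (segment · 0 m (by omega)) h

end MarkovShift

open MarkovShift

theorem revSalamaEntropy_eq_limsup_firstEntrance_general {S : Type*}
    (R : S → S → Prop)
    (hirr : ∀ a b : S, ∃ n : ℕ, ∃ w : Fin (n + 2) → S,
      w 0 = a ∧ w (Fin.last (n + 1)) = b ∧ IsPath R w)
    (a : S) (hGur hRevSal : EReal)
    (hG : hGur = Filter.limsup (fun n : ℕ =>
      ENNReal.log (({w : Fin (n + 1) → S | w 0 = a ∧ w (Fin.last n) = a ∧ IsPath R w}.encard :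
        ℝ≥0∞)) / (n : EReal)) Filter.atTop)
    (hR : hRevSal = Filter.limsup (fun n : ℕ =>
      ENNReal.log (({w : Fin (n + 1) → S | w (Fin.last n) = a ∧ IsPath R w}.encard :
        ℝ≥0∞)) / (n : EReal)) Filter.atTop)
    (hgt : hGur < hRevSal) :
    hRevSal = Filter.limsup (fun n : ℕ =>
      ENNReal.log (({w : Fin (n + 1) → S |
          w (Fin.last n) = a ∧ (∀ i : Fin n, w i.castSucc ≠ a) ∧ IsPath R w}.encard :
        ℝ≥0∞)) / (n : EReal)) Filter.atTop := by
  have hpred (v : S) : ∃ u, R u v := by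
    obtain ⟨n, w, -, hwv, hw⟩ := hirr v v
    exact ⟨w (Fin.last n).castSucc, by simpa [← hwv] using hw (Fin.last n)⟩
  obtain ⟨d, v, hv0, hvd, hv⟩ := hirr a a
  subst hG hR
  refine growthRate_eq_of_le_sum_mul (F := fun n => (firstEntrancePaths R a n).encard)
    (L := fun n => (loops R a n).encard) (fun n => ?_) (fun n => ?_) (fun n => ?_)
    d.succ_pos (fun n => ?_) hgt
  · exact_mod_cast Set.encard_mono (firstEntrancePaths_subset_pathsTo R a n)
  · exact (ENat.toENNReal_le.2 (encard_pathsTo_le_sum R a n)).trans_eq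
      ((map_sum ENat.toENNRealRingHom _ _).trans
        (Finset.sum_congr rfl fun _ _ => ENat.toENNReal_mul _ _))
  · exact_mod_cast encard_firstEntrancePaths_le R a hpred n
  · exact_mod_cast encard_loops_le_add R a ⟨hv0, hvd, hv⟩ n

/-- In a transitive countable-state topological Markov chain, if the reverse Salama
entropy exceeds the Gurevich entropy, then for any fixed vertex `a` the reverse Salama
entropy equals `limsup_n (1/n) log` (number of length-`n` first-entrance paths to `a`). -/
theorem revSalamaEntropy_eq_limsup_firstEntrance {S : Type*} [Countable S]
    (R : S → S → Prop)
    (hirr : ∀ a b : S, ∃ n : ℕ, ∃ w : Fin (n + 2) → S,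
      w 0 = a ∧ w (Fin.last (n + 1)) = b ∧ IsPath R w)
    (a : S) (hGur hRevSal : EReal)
    (hG : hGur = Filter.limsup (fun n : ℕ =>
      ENNReal.log (({w : Fin (n + 1) → S | w 0 = a ∧ w (Fin.last n) = a ∧ IsPath R w}.encard :
        ℝ≥0∞)) / (n : EReal)) Filter.atTop)
    (hR : hRevSal = Filter.limsup (fun n : ℕ =>
      ENNReal.log (({w : Fin (n + 1) → S | w (Fin.last n) = a ∧ IsPath R w}.encard :
        ℝ≥0∞)) / (n : EReal)) Filter.atTop)
    (hgt : hGur < hRevSal) :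
    hRevSal = Filter.limsup (fun n : ℕ =>
      ENNReal.log (({w : Fin (n + 1) → S |
          w (Fin.last n) = a ∧ (∀ i : Fin n, w i.castSucc ≠ a) ∧ IsPath R w}.encard :
        ℝ≥0∞)) / (n : EReal)) Filter.atTop :=
  revSalamaEntropy_eq_limsup_firstEntrance_general R hirr a hGur hRevSal hG hR hgt
end
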